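/- Every element g of the normalizer of the subgroup D of vertex-diagonal automorphisms in Aut(n_{Γ,c}^K) satisfies g(V) = V, i.e., preserves the span of the vertices. -/

import Mathlib

/-- The ideal `I_Γ` of the free Lie algebra on the vertices generated by the brackets of
non-adjacent vertices. -/
noncomputable def graphIdeal (K : Type) [Field K] {S : Type} (G : SimpleGraph S) :
    LieIdeal K (FreeLieAlgebra K S) :=
  LieSubmodule.lieSpan K (FreeLieAlgebra K S)
    {x | ∃ a b : S, ¬ G.Adj a b ∧ x = ⁅FreeLieAlgebra.of K a, FreeLieAlgebra.of K b⁆}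

/-- The Lie algebra `g_Γ^K` associated to the graph `Γ` over the field `K`. -/
def graphLieAlgebra (K : Type) [Field K] {S : Type} (G : SimpleGraph S) : Type :=
  FreeLieAlgebra K S ⧸ graphIdeal K G

noncomputable instance (K : Type) [Field K] {S : Type} (G : SimpleGraph S) :
    LieRing (graphLieAlgebra K G) :=
  inferInstanceAs (LieRing (FreeLieAlgebra K S ⧸ graphIdeal K G))

noncomputable instance (K : Type) [Field K] {S : Type} (G : SimpleGraph S) :
    LieAlgebra K (graphLieAlgebra K G) :=
  inferInstanceAs (LieAlgebra K (FreeLieAlgebra K S ⧸ graphIdeal K G))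

/-- The `c`-step nilpotent Lie algebra `n_{Γ,c}^K` associated to the graph `Γ` over `K`:
the quotient of `g_Γ^K` by `γ_{c+1}(g_Γ^K)` (note that in Mathlib's indexing
`LieModule.lowerCentralSeries K g g c = γ_{c+1}`). -/
def graphNilpotentLieAlgebra (K : Type) [Field K] {S : Type} (G : SimpleGraph S) (c : ℕ) :
    Type :=
  graphLieAlgebra K G ⧸
    LieModule.lowerCentralSeries K (graphLieAlgebra K G) (graphLieAlgebra K G) c

noncomputable instance (K : Type) [Field K] {S : Type} (G : SimpleGraph S) (c : ℕ) :
    LieRing (graphNilpotentLieAlgebra K G c) :=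
  inferInstanceAs (LieRing (graphLieAlgebra K G ⧸
    LieModule.lowerCentralSeries K (graphLieAlgebra K G) (graphLieAlgebra K G) c))

noncomputable instance (K : Type) [Field K] {S : Type} (G : SimpleGraph S) (c : ℕ) :
    LieAlgebra K (graphNilpotentLieAlgebra K G c) :=
  inferInstanceAs (LieAlgebra K (graphLieAlgebra K G ⧸
    LieModule.lowerCentralSeries K (graphLieAlgebra K G) (graphLieAlgebra K G) c))

/-- The image of a vertex in `n_{Γ,c}^K`. -/
noncomputable def graphVertex (K : Type) [Field K] {S : Type} (G : SimpleGraph S) (c : ℕ)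
    (s : S) : graphNilpotentLieAlgebra K G c :=
  LieSubmodule.Quotient.mk' _ (LieSubmodule.Quotient.mk' (graphIdeal K G) (FreeLieAlgebra.of K s))

/- ==================== auxiliary machinery ==================== -/
section Aux

variable {K : Type} [Field K] {L L' : Type} [LieRing L] [LieAlgebra K L] [LieRing L']
  [LieAlgebra K L']

/-- Quotient map by a Lie ideal, as a Lie algebra hom. -/
def lieQuotMk (I : LieIdeal K L) : L →ₗ⁅K⁆ L ⧸ I :=
  { (I : Submodule K L).mkQ with map_lie' := rfl }

/-- Lift a Lie algebra hom through a quotient. -/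
def lieQuotLift (I : LieIdeal K L) (φ : L →ₗ⁅K⁆ L') (h : ∀ x ∈ I, φ x = 0) :
    (L ⧸ I) →ₗ⁅K⁆ L' :=
  { (I : Submodule K L).liftQ φ.toLinearMap (fun x hx => h x hx) with
    map_lie' := by rintro ⟨x⟩ ⟨y⟩; exact φ.map_lie x y }

lemma lieQuotMk_eq_zero (I : LieIdeal K L) (x : L) : lieQuotMk I x = 0 ↔ x ∈ I :=
  LieSubmodule.Quotient.mk_eq_zero I

@[simp] lemma lieQuotLift_apply (I : LieIdeal K L) (φ : L →ₗ⁅K⁆ L') (h) (x : L) :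
    lieQuotLift I φ h (lieQuotMk I x) = φ x := rfl

end Aux

namespace GraphAux

variable (K : Type) [Field K] {S : Type} (G : SimpleGraph S) (c : ℕ)

/-- The canonical projection from the free Lie algebra to `n_{Γ,c}`. -/
noncomputable def nilpMk : FreeLieAlgebra K S →ₗ⁅K⁆ graphNilpotentLieAlgebra K G c :=
  LieHom.comp
    (lieQuotMk (LieModule.lowerCentralSeries K (graphLieAlgebra K G) (graphLieAlgebra K G) c))
    (lieQuotMk (graphIdeal K G))

lemma nilpMk_of (a : S) : nilpMk K G c (FreeLieAlgebra.of K a) = graphVertex K G c a := rfl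

lemma nilpMk_surjective : Function.Surjective (nilpMk K G c) := by
  intro y
  obtain ⟨z, rfl⟩ := LieSubmodule.Quotient.surjective_mk'
    (LieModule.lowerCentralSeries K (graphLieAlgebra K G) (graphLieAlgebra K G) c) y
  obtain ⟨x, rfl⟩ := LieSubmodule.Quotient.surjective_mk' (graphIdeal K G) z
  exact ⟨x, rfl⟩

end GraphAux

namespace GraphAux

variable (K : Type) [Field K] {S : Type} (G : SimpleGraph S) (c : ℕ)

/-- Scaling of the generators, on the free Lie algebra. -/
noncomputable def dFree (t : K) : FreeLieAlgebra K S →ₗ⁅K⁆ FreeLieAlgebra K S :=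
  FreeLieAlgebra.lift K (fun a => t • FreeLieAlgebra.of K a)

lemma dFree_of (t : K) (a : S) : dFree K t (FreeLieAlgebra.of K a)
    = t • FreeLieAlgebra.of K a := by simp [dFree, FreeLieAlgebra.lift_of_apply]

lemma dFree_comp (t s : K) (x : FreeLieAlgebra K S) :
    dFree K t (dFree K s x) = dFree K (t * s) x := by
  have : (dFree K t).comp (dFree K s) = dFree K (t * s) (S := S) := by
    apply FreeLieAlgebra.hom_ext
    intro a
    simp [dFree, FreeLieAlgebra.lift_of_apply, LieHom.comp_apply, smul_smul, mul_comm]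
  exact LieHom.congr_fun this x

lemma dFree_one (x : FreeLieAlgebra K S) : dFree K (S := S) 1 x = x := by
  have : dFree K (S := S) 1 = LieHom.id := by
    apply FreeLieAlgebra.hom_ext
    intro a
    simp [dFree, FreeLieAlgebra.lift_of_apply]
  rw [this]; rfl

lemma dFree_ideal (t : K) : ∀ x ∈ graphIdeal K G,
    lieQuotMk (graphIdeal K G) (dFree K t x) = 0 := by
  have h : graphIdeal K G ≤ ((lieQuotMk (graphIdeal K G)).comp (dFree K t)).ker := by
    rw [graphIdeal, LieSubmodule.lieSpan_le]
    rintro x ⟨a, b, hab, rfl⟩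
    rw [SetLike.mem_coe, LieHom.mem_ker, LieHom.comp_apply]
    have h1 : dFree K t ⁅FreeLieAlgebra.of K a, FreeLieAlgebra.of K b⁆
        = (t * t) • ⁅FreeLieAlgebra.of K a, FreeLieAlgebra.of K b⁆ := by
      rw [LieHom.map_lie, dFree_of, dFree_of, smul_lie,
        show ⁅FreeLieAlgebra.of K a, t • FreeLieAlgebra.of K b⁆
          = t • ⁅FreeLieAlgebra.of K a, FreeLieAlgebra.of K b⁆ from lie_smul t _ _, smul_smul]
    rw [h1, map_smul, smul_eq_zero]
    right
    rw [lieQuotMk_eq_zero]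
    exact LieSubmodule.subset_lieSpan ⟨a, b, hab, rfl⟩
  intro x hx
  exact LieHom.mem_ker.mp (h hx)

/-- Scaling of the generators, on `g_Γ`. -/
noncomputable def dGraph (t : K) : graphLieAlgebra K G →ₗ⁅K⁆ graphLieAlgebra K G :=
  lieQuotLift (graphIdeal K G) ((lieQuotMk (graphIdeal K G)).comp (dFree K t))
    (dFree_ideal K G t)

lemma dGraph_mk (t : K) (x : FreeLieAlgebra K S) :
    dGraph K G t (lieQuotMk (graphIdeal K G) x) = lieQuotMk (graphIdeal K G) (dFree K t x) := rfl

lemma dGraph_lcs (t : K) : ∀ x ∈ LieModule.lowerCentralSeries K (graphLieAlgebra K G)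
    (graphLieAlgebra K G) c,
    lieQuotMk (LieModule.lowerCentralSeries K (graphLieAlgebra K G) (graphLieAlgebra K G) c)
      (dGraph K G t x) = 0 := by
  intro x hx
  have h1 : dGraph K G t x ∈ LieIdeal.map (dGraph K G t)
      (LieModule.lowerCentralSeries K (graphLieAlgebra K G) (graphLieAlgebra K G) c) :=
    LieIdeal.mem_map hx
  have h2 := LieIdeal.map_lowerCentralSeries_le (R := K) c (f := dGraph K G t)
  have : dGraph K G t x ∈ LieModule.lowerCentralSeries K (graphLieAlgebra K G)
      (graphLieAlgebra K G) c := h2 h1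
  rw [show lieQuotMk (LieModule.lowerCentralSeries K (graphLieAlgebra K G)
      (graphLieAlgebra K G) c) (dGraph K G t x) = LieSubmodule.Quotient.mk' _ (dGraph K G t x)
      from rfl, LieSubmodule.Quotient.mk_eq_zero]
  exact this

/-- Scaling of the generators, on `n_{Γ,c}`. -/
noncomputable def dNilp (t : K) :
    graphNilpotentLieAlgebra K G c →ₗ⁅K⁆ graphNilpotentLieAlgebra K G c :=
  lieQuotLift _ ((lieQuotMk _).comp (dGraph K G t)) (dGraph_lcs K G c t)

lemma dNilp_mk (t : K) (x : FreeLieAlgebra K S) :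
    dNilp K G c t (GraphAux.nilpMk K G c x) = GraphAux.nilpMk K G c (dFree K t x) := rfl

lemma dNilp_vertex (t : K) (a : S) :
    dNilp K G c t (graphVertex K G c a) = t • graphVertex K G c a := by
  rw [← nilpMk_of, dNilp_mk, dFree_of, map_smul, nilpMk_of]

lemma dNilp_comp (t s : K) (x : graphNilpotentLieAlgebra K G c) :
    dNilp K G c t (dNilp K G c s x) = dNilp K G c (t * s) x := by
  obtain ⟨y, rfl⟩ := nilpMk_surjective K G c x
  rw [dNilp_mk, dNilp_mk, dNilp_mk, dFree_comp]

lemma dNilp_one (x : graphNilpotentLieAlgebra K G c) : dNilp K G c 1 x = x := by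
  obtain ⟨y, rfl⟩ := nilpMk_surjective K G c x
  rw [dNilp_mk, dFree_one]

/-- Scaling of the generators, as an automorphism of `n_{Γ,c}`. -/
noncomputable def fEquiv (t : K) (ht : t ≠ 0) :
    graphNilpotentLieAlgebra K G c ≃ₗ⁅K⁆ graphNilpotentLieAlgebra K G c :=
  { dNilp K G c t with
    invFun := dNilp K G c t⁻¹
    left_inv := fun x => by
      show dNilp K G c t⁻¹ (dNilp K G c t x) = x
      rw [dNilp_comp, inv_mul_cancel₀ ht, dNilp_one]
    right_inv := fun x => by
      show dNilp K G c t (dNilp K G c t⁻¹ x) = x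
      rw [dNilp_comp, mul_inv_cancel₀ ht, dNilp_one] }

lemma fEquiv_apply (t : K) (ht : t ≠ 0) (x : graphNilpotentLieAlgebra K G c) :
    fEquiv K G c t ht x = dNilp K G c t x := rfl

end GraphAux

attribute [local instance 100] LieRing.ofAssociativeRing

namespace GraphAux

variable (K : Type) [Field K] {S : Type} (G : SimpleGraph S) (c : ℕ)

lemma pi_lie_zero (u v : S → K) : ⁅u, v⁆ = 0 := by
  ext s; simp [Ring.lie_def, mul_comm]

open Classical in
/-- The indicator function of a vertex. -/
noncomputable def evtx (a : S) : S → K := fun b => if a = b then 1 else 0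

/-- The abelianization-like morphism on the free Lie algebra. -/
noncomputable def thFree : FreeLieAlgebra K S →ₗ⁅K⁆ (S → K) :=
  FreeLieAlgebra.lift K (evtx K)

lemma thFree_of (a : S) : thFree K (FreeLieAlgebra.of K a) = evtx K a := by
  simp [thFree, FreeLieAlgebra.lift_of_apply]

lemma thFree_ideal : ∀ x ∈ graphIdeal K G, thFree K x = 0 := by
  have h : graphIdeal K G ≤ (thFree K (S := S)).ker := by
    rw [graphIdeal, LieSubmodule.lieSpan_le]
    rintro x ⟨a, b, hab, rfl⟩
    rw [SetLike.mem_coe, LieHom.mem_ker, LieHom.map_lie, pi_lie_zero]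
  intro x hx
  exact LieHom.mem_ker.mp (h hx)

/-- The abelianization-like morphism on `g_Γ`. -/
noncomputable def thGraph : graphLieAlgebra K G →ₗ⁅K⁆ (S → K) :=
  lieQuotLift (graphIdeal K G) (thFree K) (thFree_ideal K G)

lemma thGraph_lcs (hc : 1 ≤ c) : ∀ x ∈ LieModule.lowerCentralSeries K (graphLieAlgebra K G)
    (graphLieAlgebra K G) c, thGraph K G x = 0 := by
  have h1 : LieModule.lowerCentralSeries K (graphLieAlgebra K G) (graphLieAlgebra K G) c ≤
      LieModule.lowerCentralSeries K (graphLieAlgebra K G) (graphLieAlgebra K G) 1 :=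
    LieModule.antitone_lowerCentralSeries K _ _ hc
  have h2 : LieModule.lowerCentralSeries K (graphLieAlgebra K G) (graphLieAlgebra K G) 1 ≤
      (thGraph K G).ker := by
    rw [LieModule.lowerCentralSeries_succ, LieModule.lowerCentralSeries_zero]
    rw [LieSubmodule.lieIdeal_oper_eq_span, LieSubmodule.lieSpan_le]
    rintro x ⟨u, v, rfl⟩
    rw [SetLike.mem_coe, LieHom.mem_ker, LieHom.map_lie, pi_lie_zero]
  intro x hx
  exact LieHom.mem_ker.mp (h2 (h1 hx))

/-- The abelianization-like morphism on `n_{Γ,c}`. -/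
noncomputable def thNilp (hc : 1 ≤ c) :
    graphNilpotentLieAlgebra K G c →ₗ⁅K⁆ (S → K) :=
  lieQuotLift _ (thGraph K G) (thGraph_lcs K G c hc)

lemma thNilp_mk (hc : 1 ≤ c) (x : FreeLieAlgebra K S) :
    thNilp K G c hc (nilpMk K G c x) = thFree K x := rfl

lemma thNilp_vertex (hc : 1 ≤ c) (a : S) :
    thNilp K G c hc (graphVertex K G c a) = evtx K a := by
  rw [← nilpMk_of, thNilp_mk, thFree_of]

lemma thFree_dFree (t : K) (x : FreeLieAlgebra K S) :
    thFree K (dFree K t x) = t • thFree K x := by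
  let T : FreeLieAlgebra K S →ₗ⁅K⁆ (S → K) :=
    { toLinearMap := t • (thFree K (S := S)).toLinearMap
      map_lie' := by
        intro x y
        show t • thFree K ⁅x, y⁆ = ⁅t • thFree K x, t • thFree K y⁆
        rw [LieHom.map_lie, pi_lie_zero, pi_lie_zero, smul_zero] }
  have h : (thFree K (S := S)).comp (dFree K t) = T := by
    apply FreeLieAlgebra.hom_ext
    intro a
    show thFree K (dFree K t (FreeLieAlgebra.of K a)) = t • thFree K (FreeLieAlgebra.of K a)
    rw [dFree_of, map_smul]
  exact LieHom.congr_fun h x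

lemma thNilp_dNilp (hc : 1 ≤ c) (t : K) (x : graphNilpotentLieAlgebra K G c) :
    thNilp K G c hc (dNilp K G c t x) = t • thNilp K G c hc x := by
  obtain ⟨y, rfl⟩ := nilpMk_surjective K G c x
  rw [dNilp_mk, thNilp_mk, thNilp_mk, thFree_dFree]

/-- The vertices generate `n_{Γ,c}` as a Lie algebra. -/
lemma mem_of_forall_vertex (Q : LieSubalgebra K (graphNilpotentLieAlgebra K G c))
    (hQ : ∀ a, graphVertex K G c a ∈ Q) (x : graphNilpotentLieAlgebra K G c) : x ∈ Q := by
  obtain ⟨y, rfl⟩ := nilpMk_surjective K G c x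
  let Q' : LieSubalgebra K (FreeLieAlgebra K S) := LieSubalgebra.comap (nilpMk K G c) Q
  suffices h : ∀ z, z ∈ Q' by exact h y
  intro z
  let F : FreeLieAlgebra K S →ₗ⁅K⁆ Q' :=
    FreeLieAlgebra.lift K (fun a => ⟨FreeLieAlgebra.of K a, hQ a⟩)
  have h : Q'.incl.comp F = LieHom.id := by
    apply FreeLieAlgebra.hom_ext
    intro a
    show (F (FreeLieAlgebra.of K a) : FreeLieAlgebra K S) = FreeLieAlgebra.of K a
    rw [show F (FreeLieAlgebra.of K a) = ⟨FreeLieAlgebra.of K a, hQ a⟩ from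
      FreeLieAlgebra.lift_of_apply _ _]
  have : (F z : FreeLieAlgebra K S) = z := LieHom.congr_fun h z
  rw [← this]
  exact (F z).2

end GraphAux

namespace GraphAux

variable (K : Type) [Field K] {S : Type} (G : SimpleGraph S) (c : ℕ)

/-- The span of the vertices. -/
noncomputable def Vspan : Submodule K (graphNilpotentLieAlgebra K G c) :=
  Submodule.span K (Set.range (graphVertex K G c))

/-- Eigenspaces of the doubling automorphism. -/
noncomputable def Eig (μ : K) : Submodule K (graphNilpotentLieAlgebra K G c) :=
  Module.End.eigenspace (dNilp K G c 2).toLinearMap μ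

lemma mem_Eig_iff (μ : K) (x : graphNilpotentLieAlgebra K G c) :
    x ∈ Eig K G c μ ↔ dNilp K G c 2 x = μ • x := Module.End.mem_eigenspace_iff

lemma vertex_mem_Eig2 (a : S) : graphVertex K G c a ∈ Eig K G c 2 := by
  rw [mem_Eig_iff]
  exact dNilp_vertex K G c 2 a

lemma Vspan_le_Eig2 : Vspan K G c ≤ Eig K G c 2 := by
  rw [Vspan, Submodule.span_le]
  rintro x ⟨a, rfl⟩
  exact vertex_mem_Eig2 K G c a

lemma bracket_mem_Eig (j k : ℕ) (x y : graphNilpotentLieAlgebra K G c)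
    (hx : x ∈ Eig K G c (2 ^ j)) (hy : y ∈ Eig K G c (2 ^ k)) :
    ⁅x, y⁆ ∈ Eig K G c (2 ^ (j + k)) := by
  rw [mem_Eig_iff] at hx hy ⊢
  rw [LieHom.map_lie, hx, hy, smul_lie,
    show ⁅x, (2:K) ^ k • y⁆ = (2:K) ^ k • ⁅x, y⁆ from lie_smul _ _ _,
    smul_smul, ← pow_add]

/-- The supremum of the higher eigenspaces. -/
noncomputable def Tsup : Submodule K (graphNilpotentLieAlgebra K G c) :=
  ⨆ k : ℕ, Eig K G c (2 ^ (k + 2))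

lemma top_le_Vspan_sup_Tsup :
    (⊤ : Submodule K (graphNilpotentLieAlgebra K G c)) ≤ Vspan K G c ⊔ Tsup K G c := by
  set R : Submodule K (graphNilpotentLieAlgebra K G c) := ⨆ k : ℕ, Eig K G c (2 ^ (k + 1))
    with hR
  have hVR : Vspan K G c ≤ R := by
    refine le_trans (Vspan_le_Eig2 K G c) ?_
    have : Eig K G c 2 = Eig K G c (2 ^ (0 + 1)) := by norm_num
    rw [this]
    exact le_iSup (fun k => Eig K G c (2 ^ (k + 1))) 0
  have hTR : Tsup K G c ≤ R := by
    refine iSup_le fun k => ?_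
    have : (k + 2) = (k + 1) + 1 := by omega
    rw [this]
    exact le_iSup (fun k => Eig K G c (2 ^ (k + 1))) (k + 1)
  -- pure elements bracket into Tsup
  have hpure : ∀ j, ∀ x ∈ Eig K G c (2 ^ (j + 1)), ∀ y ∈ R, ⁅x, y⁆ ∈ Tsup K G c := by
    intro j x hx
    have : R ≤ Submodule.comap (LieModule.toEnd K (graphNilpotentLieAlgebra K G c)
        (graphNilpotentLieAlgebra K G c) x) (Tsup K G c) := by
      refine iSup_le fun k => ?_
      intro y hy
      simp only [Submodule.mem_comap]
      have h1 : (LieModule.toEnd K (graphNilpotentLieAlgebra K G c)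
          (graphNilpotentLieAlgebra K G c) x) y = ⁅x, y⁆ := rfl
      rw [h1]
      have h2 := bracket_mem_Eig K G c (j+1) (k+1) x y hx hy
      have h3 : (j + 1) + (k + 1) = (j + k) + 2 := by omega
      rw [h3] at h2
      exact le_iSup (fun k => Eig K G c (2 ^ (k + 2))) (j + k) h2
    intro y hy
    exact this hy
  have hbr : ∀ x ∈ R, ∀ y ∈ R, ⁅x, y⁆ ∈ Tsup K G c := by
    intro x hx y hy
    have : R ≤ Submodule.comap (LieModule.toEnd K (graphNilpotentLieAlgebra K G c)
        (graphNilpotentLieAlgebra K G c) y) (Tsup K G c) := by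
      refine iSup_le fun j => ?_
      intro z hz
      simp only [Submodule.mem_comap]
      have h1 : (LieModule.toEnd K (graphNilpotentLieAlgebra K G c)
          (graphNilpotentLieAlgebra K G c) y) z = ⁅y, z⁆ := rfl
      rw [h1, show ⁅y, z⁆ = -⁅z, y⁆ from (lie_skew y z).symm]
      exact neg_mem (hpure j z hz y hy)
    have h2 : ⁅y, x⁆ ∈ Tsup K G c := this hx
    rw [show ⁅x, y⁆ = -⁅y, x⁆ from (lie_skew x y).symm]
    exact neg_mem h2
  -- assemble the Lie subalgebra
  let Q : LieSubalgebra K (graphNilpotentLieAlgebra K G c) :=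
    { Vspan K G c ⊔ Tsup K G c with
      lie_mem' := by
        intro x y hx hy
        have hx' : x ∈ R := le_trans (sup_le hVR hTR) le_rfl hx
        have hy' : y ∈ R := le_trans (sup_le hVR hTR) le_rfl hy
        exact (le_sup_right (α := Submodule K (graphNilpotentLieAlgebra K G c))) (hbr x hx' y hy') }
  intro x _
  exact mem_of_forall_vertex K G c Q
    (fun a => (le_sup_left (α := Submodule K (graphNilpotentLieAlgebra K G c))) (Submodule.subset_span ⟨a, rfl⟩)) x

end GraphAux

namespace GraphAux

variable (K : Type) [Field K] {S : Type} (G : SimpleGraph S) (c : ℕ)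

lemma two_pow_ne_two [CharZero K] (k : ℕ) : (2 : K) ^ (k + 2) ≠ 2 := by
  intro h
  have h2 : ((2 ^ (k + 2) : ℕ) : K) = ((2 ^ 1 : ℕ) : K) := by push_cast; simpa using h
  have := Nat.cast_injective (R := K) h2
  have := Nat.pow_right_injective (le_refl 2) this
  omega

lemma Eig2_eq_Vspan [CharZero K] : Eig K G c 2 = Vspan K G c := by
  refine le_antisymm ?_ (Vspan_le_Eig2 K G c)
  intro x hx
  have hxtop : x ∈ Vspan K G c ⊔ Tsup K G c := top_le_Vspan_sup_Tsup K G c trivial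
  obtain ⟨v, hv, w, hw, rfl⟩ := Submodule.mem_sup.mp hxtop
  have hwE : w ∈ Eig K G c 2 := by
    have : v ∈ Eig K G c 2 := Vspan_le_Eig2 K G c hv
    have h2 : (v + w) - v ∈ Eig K G c 2 := sub_mem hx this
    simpa using h2
  have hwS : w ∈ ⨆ (ν : K) (_ : ν ≠ 2), Eig K G c ν := by
    refine (iSup_le fun k => ?_ : Tsup K G c ≤ _) hw
    exact le_iSup₂ (f := fun (ν : K) (_ : ν ≠ 2) => Eig K G c ν)
      ((2:K) ^ (k + 2)) (two_pow_ne_two K k)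
  have hind := Module.End.eigenspaces_iSupIndep (dNilp K G c 2).toLinearMap
  have hdisj := hind 2
  have : w = 0 := Submodule.disjoint_def.mp hdisj w hwE hwS
  simpa [this] using hv

end GraphAux

namespace GraphAux

variable (K : Type) [Field K] {S : Type} (G : SimpleGraph S) (c : ℕ)

lemma span_evtx [Fintype S] :
    Submodule.span K (Set.range (evtx K (S := S))) = ⊤ := by
  classical
  rw [eq_top_iff]
  intro v _
  have hv : v = ∑ a : S, v a • evtx K a := by
    ext b
    rw [Finset.sum_apply]
    simp only [Pi.smul_apply, evtx, smul_eq_mul]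
    rw [Finset.sum_eq_single b]
    · simp
    · intro a _ hab
      simp [if_neg hab]
    · intro h; exact absurd (Finset.mem_univ b) h
  rw [hv]
  exact Submodule.sum_mem _ fun a _ => Submodule.smul_mem _ _ (Submodule.subset_span ⟨a, rfl⟩)

/-- The key eigenvector-counting lemma: if every `h(α)` is an eigenvector of the doubling
map, then every `h(α)` lies in the span of the vertices. -/
lemma image_vertex_mem_Vspan [CharZero K] [Fintype S] (hc : 1 ≤ c)
    (h : graphNilpotentLieAlgebra K G c ≃ₗ⁅K⁆ graphNilpotentLieAlgebra K G c)
    (hdiag : ∀ a : S, ∃ μ : K, dNilp K G c 2 (h (graphVertex K G c a))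
      = μ • h (graphVertex K G c a)) :
    ∀ a : S, h (graphVertex K G c a) ∈ Vspan K G c := by
  classical
  choose Φ hΦ using hdiag
  set θ := thNilp K G c hc with hθ
  -- vertices with eigenvalue ≠ 2 die under θ
  have hkill : ∀ a : S, Φ a ≠ 2 → θ (h (graphVertex K G c a)) = 0 := by
    intro a ha
    have h1 : Φ a • θ (h (graphVertex K G c a))
        = (2 : K) • θ (h (graphVertex K G c a)) := by
      rw [← map_smul, ← hΦ a, hθ, thNilp_dNilp]
    have h2 : (Φ a - 2) • θ (h (graphVertex K G c a)) = 0 := by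
      rw [sub_smul, h1, sub_self]
    rcases smul_eq_zero.mp h2 with h3 | h3
    · exact absurd (by linear_combination h3) ha
    · exact h3
  -- θ of everything lies in the span of the θ-images of the h-vertices
  set W := Submodule.span K (Set.range fun a => θ (h (graphVertex K G c a))) with hW
  have hWall : ∀ x : graphNilpotentLieAlgebra K G c, θ x ∈ W := by
    let P : LieSubalgebra K (graphNilpotentLieAlgebra K G c) :=
      { Submodule.comap (θ : graphNilpotentLieAlgebra K G c →ₗ[K] (S → K)) W with
        lie_mem' := by
          intro x y _ _
          show θ ⁅x, y⁆ ∈ W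
          rw [LieHom.map_lie, pi_lie_zero]
          exact zero_mem W }
    let P' : LieSubalgebra K (graphNilpotentLieAlgebra K G c) :=
      LieSubalgebra.comap h.toLieHom P
    have hP' : ∀ a, graphVertex K G c a ∈ P' :=
      fun a => Submodule.subset_span ⟨a, rfl⟩
    intro x
    have hx : h (h.symm x) ∈ P := mem_of_forall_vertex K G c P' hP' (h.symm x)
    rw [LieEquiv.apply_symm_apply] at hx
    exact hx
  -- hence W = ⊤
  have hWtop : W = ⊤ := by
    rw [eq_top_iff, ← span_evtx K (S := S), Submodule.span_le]
    rintro v ⟨a, rfl⟩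
    have : θ (graphVertex K G c a) = evtx K a := thNilp_vertex K G c hc a
    rw [← this]
    exact hWall _
  -- counting
  set A : Finset S := Finset.univ.filter (fun a => Φ a = 2) with hA
  set s : Finset (S → K) := A.image (fun a => θ (h (graphVertex K G c a))) with hs
  have hWs : W ≤ Submodule.span K (s : Set (S → K)) := by
    rw [hW, Submodule.span_le]
    rintro v ⟨a, rfl⟩
    simp only
    by_cases hmem : Φ a = 2
    · exact Submodule.subset_span (Finset.mem_image_of_mem _ (by simp [hA, hmem]))
    · simp only [hkill a hmem]; exact zero_mem _
  have hstop : Submodule.span K (s : Set (S → K)) = ⊤ :=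
    eq_top_iff.mpr (le_trans (hWtop ▸ le_rfl) hWs)
  have hrank : Fintype.card S ≤ s.card := by
    have h1 : Module.finrank K (S → K) = Fintype.card S := Module.finrank_pi K
    have h2 := finrank_span_finset_le_card (R := K) s
    rw [Set.finrank, hstop, finrank_top] at h2
    omega
  have hcard : A = Finset.univ := by
    apply Finset.eq_univ_of_card
    have h3 : s.card ≤ A.card := hs ▸ Finset.card_image_le
    have hA2 : A.card ≤ Fintype.card S := Finset.card_le_univ A
    omega
  intro a
  have ha : Φ a = 2 := by
    have := hcard ▸ Finset.mem_univ a
    simpa [hA] using this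
  have : h (graphVertex K G c a) ∈ Eig K G c 2 := by
    rw [mem_Eig_iff, hΦ a, ha]
  rwa [Eig2_eq_Vspan] at this

end GraphAux

/-- `f` is a vertex-diagonal automorphism: `f(α) = Ψ(α) • α` for every vertex `α`. -/
def IsVertexDiagonal (K : Subfield ℂ) {S : Type} (G : SimpleGraph S) (c : ℕ)
    (f : graphNilpotentLieAlgebra K G c ≃ₗ⁅(K : Type)⁆ graphNilpotentLieAlgebra K G c) :
    Prop :=
  ∃ Ψ : S → K, ∀ a : S, f (graphVertex K G c a) = Ψ a • graphVertex K G c a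

/-- every element `g` of the normalizer of the subgroup `D` of
vertex-diagonal automorphisms in `Aut(n_{Γ,c}^K)` maps the span `V` of the vertices onto
itself. -/
theorem normalizer_of_vertex_diagonal_preserves_vertex_span
    (K : Subfield ℂ) (S : Type) [Fintype S] (G : SimpleGraph S) (c : ℕ) (hc : 1 < c)
    (g : graphNilpotentLieAlgebra K G c ≃ₗ⁅(K : Type)⁆ graphNilpotentLieAlgebra K G c)
    (hnorm : ∀ f, IsVertexDiagonal K G c f ↔
      IsVertexDiagonal K G c ((g.symm.trans f).trans g)) :
    Submodule.map (g : graphNilpotentLieAlgebra K G c ≃ₗ[(K : Type)]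
        graphNilpotentLieAlgebra K G c).toLinearMap
      (Submodule.span K (Set.range (graphVertex K G c))) =
    Submodule.span K (Set.range (graphVertex K G c)) := by
  classical
  have hc1 : 1 ≤ c := le_of_lt hc
  have h2ne : (2 : (K : Type)) ≠ 0 := two_ne_zero
  set f₂ := GraphAux.fEquiv (K : Type) G c 2 h2ne with hf₂
  have hf₂diag : IsVertexDiagonal K G c f₂ :=
    ⟨fun _ => 2, fun a => GraphAux.dNilp_vertex (K : Type) G c 2 a⟩
  -- g⁻¹ maps vertices into V
  obtain ⟨Φ, hΦ⟩ := (hnorm f₂).mp hf₂diag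
  have hsymmdiag : ∀ a : S, ∃ μ : (K : Type),
      GraphAux.dNilp (K : Type) G c 2 (g.symm (graphVertex K G c a))
        = μ • g.symm (graphVertex K G c a) := by
    intro a
    refine ⟨Φ a, ?_⟩
    have h1 := hΦ a
    rw [LieEquiv.trans_apply, LieEquiv.trans_apply] at h1
    have h2 := congrArg g.symm h1
    rw [LieEquiv.symm_apply_apply] at h2
    rw [show g.symm (Φ a • graphVertex (K : Type) G c a)
        = Φ a • g.symm (graphVertex (K : Type) G c a) from map_smul g.symm.toLieHom _ _] at h2
    exact h2
  have hsymmV : ∀ a, g.symm (graphVertex K G c a) ∈ GraphAux.Vspan (K : Type) G c :=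
    GraphAux.image_vertex_mem_Vspan (K : Type) G c hc1 g.symm hsymmdiag
  -- g maps vertices into V
  set h' := (g.trans f₂).trans g.symm with hh'
  have hkey : ((g.symm.trans h').trans g) = f₂ := by
    ext x
    rw [LieEquiv.trans_apply, LieEquiv.trans_apply, hh', LieEquiv.trans_apply,
      LieEquiv.trans_apply, LieEquiv.apply_symm_apply, LieEquiv.apply_symm_apply]
  obtain ⟨Φ', hΦ'⟩ := (hnorm h').mpr (by rw [hkey]; exact hf₂diag)
  have hgdiag : ∀ a : S, ∃ μ : (K : Type),
      GraphAux.dNilp (K : Type) G c 2 (g (graphVertex K G c a))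
        = μ • g (graphVertex K G c a) := by
    intro a
    refine ⟨Φ' a, ?_⟩
    have h1 := hΦ' a
    rw [hh', LieEquiv.trans_apply, LieEquiv.trans_apply] at h1
    have h2 := congrArg g h1
    rw [LieEquiv.apply_symm_apply] at h2
    rw [show g (Φ' a • graphVertex (K : Type) G c a)
        = Φ' a • g (graphVertex (K : Type) G c a) from map_smul g.toLieHom _ _] at h2
    exact h2
  have hgV : ∀ a, g (graphVertex K G c a) ∈ GraphAux.Vspan (K : Type) G c :=
    GraphAux.image_vertex_mem_Vspan (K : Type) G c hc1 g hgdiag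
  -- conclude
  apply le_antisymm
  · rw [Submodule.map_span, Submodule.span_le]
    rintro v ⟨w, ⟨a, rfl⟩, rfl⟩
    exact hgV a
  · intro v hv
    have hsv : g.symm v ∈ Submodule.span K (Set.range (graphVertex K G c)) := by
      have hmap : Submodule.map (g.symm : graphNilpotentLieAlgebra K G c ≃ₗ[(K : Type)]
          graphNilpotentLieAlgebra K G c).toLinearMap
          (Submodule.span K (Set.range (graphVertex K G c))) ≤
          Submodule.span K (Set.range (graphVertex K G c)) := by
        rw [Submodule.map_span, Submodule.span_le]
        rintro w ⟨u, ⟨a, rfl⟩, rfl⟩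
        exact hsymmV a
      exact hmap ⟨v, hv, rfl⟩
    refine ⟨g.symm v, hsv, ?_⟩
    show g (g.symm v) = v
    exact g.apply_symm_apply v
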